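/- arXiv:1607.03227 — 4 statements merged into one kernel-verified Lean document; each statement's English description precedes it below -/
import Mathlib

section
/- Let R, P : F → ℝ with P(S) > 0 for all S in a nonempty finite set F, and let q* = max_{S∈F} R(S)/P(S). Then max_{S∈F} (R(S) − q*·P(S)) = 0. Conversely, if for some q the maximum of R(S) − q·P(S) over F equals 0, then q = q*. -/
/-- Dinkelbach equivalence: if `q* = max R/P` over a nonempty finite feasible set,
then `max (R − q*·P) = 0`; conversely if `max (R − q·P) = 0` then `q = q*`. -/
theorem dinkelbach_equivalence {F : Type*} [Fintype F] [Nonempty F]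
    (R P : F → ℝ) (hP : ∀ S, 0 < P S) (qstar : ℝ)
    (hq : IsGreatest (Set.range fun S => R S / P S) qstar) :
    IsGreatest (Set.range fun S => R S - qstar * P S) 0 ∧
    ∀ q : ℝ, IsGreatest (Set.range fun S => R S - q * P S) 0 → q = qstar := by
  obtain ⟨⟨S0, hS0⟩, hub⟩ := hq
  simp only at hS0
  have hub' : ∀ S, R S / P S ≤ qstar := fun S => hub ⟨S, rfl⟩
  have hS0' : R S0 = qstar * P S0 := by
    have hp := (hP S0).ne'
    field_simp at hS0; linarith
  constructor
  · constructor
    · exact ⟨S0, by simp only; linarith⟩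
    · rintro x ⟨S, rfl⟩
      simp only
      have h := (div_le_iff₀ (hP S)).mp (hub' S)
      linarith
  · rintro q ⟨⟨S1, hS1⟩, hub2⟩
    simp only at hS1
    have hp1 := hP S1
    have h1 : q ≤ qstar := by
      have : q = R S1 / P S1 := by field_simp; linarith
      rw [this]; exact hub' S1
    have h2 : qstar ≤ q := by
      have h := hub2 ⟨S0, rfl⟩
      simp only at h
      nlinarith [hP S0]
    linarith
end

section
/- For fixed constants C > 0, A > 0, R > 0, the equation obtained from the stationarity condition of w ↦ C·(W − w) − A·(2^{R/w} − 1)·w (ignoring the constraint w ≤ W) has solution w = R·ln 2 / (W(e^{−1}·(C/A − 1)) + 1) whenever C/A > 1, where W denotes the Lambert W function (principal branch). -/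
/-!
With `w₀ = R log 2 / (L + 1)` one has `R log 2 / w₀ = L + 1`, so `2 ^ (R / w₀) = e · e^L`, and the
derivative `-C - A (2^{R/w} (1 - R log 2 / w) - 1)` of the objective at `w₀` becomes
`A - C + A e · L e^L`. Since `L = W(e⁻¹ (C/A - 1))`, `L e^L = e⁻¹ (C/A - 1)` and this vanishes.
-/

open Real

lemma pos_of_mul_exp_self_eq {y x : ℝ} (h : y * exp y = x) (hx : 0 < x) : 0 < y :=
  pos_of_mul_pos_left (h ▸ hx) (exp_pos y).le

lemma hasDerivAt_rpow_div_sub_one_mul {b : ℝ} (hb : 0 < b) (R : ℝ) {w : ℝ} (hw : w ≠ 0) :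
    HasDerivAt (fun w => (b ^ (R / w) - 1) * w) (b ^ (R / w) * (1 - R * log b / w) - 1) w := by
  have hdiv : HasDerivAt (fun w => R / w) (-(R / w ^ 2)) w := by
    simpa only [div_eq_mul_inv, neg_mul, mul_neg] using (hasDerivAt_inv hw).const_mul R
  refine (((hdiv.const_rpow hb).sub_const 1).fun_mul (hasDerivAt_id' w)).congr_deriv ?_
  field_simp
  ring

lemma hasDerivAt_bandwidth_objective {b : ℝ} (hb : 0 < b) (C A R Wtot : ℝ) {w : ℝ} (hw : w ≠ 0) :
    HasDerivAt (fun w => C * (Wtot - w) - A * ((b ^ (R / w) - 1) * w))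
      (-C - A * (b ^ (R / w) * (1 - R * log b / w) - 1)) w := by
  refine ((((hasDerivAt_id' w).const_sub Wtot).const_mul C).fun_sub
    ((hasDerivAt_rpow_div_sub_one_mul hb R hw).const_mul A)).congr_deriv ?_
  ring

lemma rpow_div_div_log_mul_eq_exp {b : ℝ} (hb : 0 < b) {R : ℝ} (hR : R * log b ≠ 0)
    (k : ℝ) : b ^ (R / (R * log b / k)) = exp k := by
  rw [rpow_def_of_pos hb, ← mul_div_assoc, mul_comm (log b), div_div_cancel₀ hR]

theorem optimal_bandwidth_lambertW_general (C A R Wtot : ℝ) (hA : 0 < A) (hR : 0 < R)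
    (hCA : 1 < C / A) (Wl : ℝ → ℝ)
    (hWl : Wl ((Real.exp 1)⁻¹ * (C / A - 1)) * Real.exp (Wl ((Real.exp 1)⁻¹ * (C / A - 1)))
      = (Real.exp 1)⁻¹ * (C / A - 1)) :
    deriv (fun w : ℝ => C * (Wtot - w) - A * (((2 : ℝ) ^ (R / w) - 1) * w))
      (R * Real.log 2 / (Wl ((Real.exp 1)⁻¹ * (C / A - 1)) + 1)) = 0 := by
  set L := Wl ((exp 1)⁻¹ * (C / A - 1))
  have hL : 0 < L :=
    pos_of_mul_exp_self_eq hWl (mul_pos (inv_pos.mpr (exp_pos 1)) (sub_pos.mpr hCA))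
  have hRlog : R * log 2 ≠ 0 := (mul_pos hR (log_pos one_lt_two)).ne'
  have hw₀ : R * log 2 / (L + 1) ≠ 0 := div_ne_zero hRlog (by positivity)
  have hWl' : A * exp 1 * (L * exp L) = C - A := by
    rw [hWl]
    field_simp
  rw [(hasDerivAt_bandwidth_objective two_pos C A R Wtot hw₀).deriv,
    rpow_div_div_log_mul_eq_exp two_pos hRlog, div_div_cancel₀ hRlog, exp_add]
  linear_combination hWl'

/-- The stationarity condition of `w ↦ C·(Wtot − w) − A·(2^{R/w} − 1)·w` (ignoring
`w ≤ Wtot`) is solved by `w = R·ln 2 / (W(e⁻¹·(C/A − 1)) + 1)` when `C/A > 1`,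
where `W` is the principal Lambert W function, i.e. `W(x)·e^{W(x)} = x`. -/
theorem optimal_bandwidth_lambertW (C A R Wtot : ℝ) (hC : 0 < C) (hA : 0 < A) (hR : 0 < R)
    (hCA : 1 < C / A) (Wl : ℝ → ℝ)
    (hWl : Wl ((Real.exp 1)⁻¹ * (C / A - 1)) * Real.exp (Wl ((Real.exp 1)⁻¹ * (C / A - 1)))
      = (Real.exp 1)⁻¹ * (C / A - 1)) :
    deriv (fun w : ℝ => C * (Wtot - w) - A * (((2 : ℝ) ^ (R / w) - 1) * w))
      (R * Real.log 2 / (Wl ((Real.exp 1)⁻¹ * (C / A - 1)) + 1)) = 0 :=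
  optimal_bandwidth_lambertW_general C A R Wtot hA hR hCA Wl hWl
end

section
/- Fix a total power budget P > 0 and bandwidth B > 0 split among n users as b₁,...,bₙ ≥ 0 with ∑bᵢ = B, with powers p₁,...,pₙ ≥ 0, ∑pᵢ = P, and channel gains g₁ ≥ g₂ ≥ ... ≥ gₙ > 0. Then the sum rate ∑ᵢ bᵢ·log₂(1 + pᵢ·g₁/(bᵢ·N₀)) with all power and bandwidth given to user 1 (b₁ = B, p₁ = P) is at least ∑ᵢ bᵢ·log₂(1 + pᵢ·gᵢ/(bᵢ·N₀)) for any feasible split. -/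
/-- Giving all traded bandwidth `B` and power `P` to the user with the best channel
gain `g 0` achieves a sum rate at least that of any feasible split. -/
theorem best_user_gets_all (n : ℕ) (b p g : Fin (n + 1) → ℝ) (B P N₀ : ℝ)
    (hB : 0 < B) (hP : 0 < P) (hN : 0 < N₀)
    (hb : ∀ i, 0 ≤ b i) (hp : ∀ i, 0 ≤ p i)
    (hsumb : ∑ i, b i = B) (hsump : ∑ i, p i = P)
    (hg : ∀ i j : Fin (n + 1), i ≤ j → g j ≤ g i) (hgpos : ∀ i, 0 < g i) :
    ∑ i, b i * Real.logb 2 (1 + p i * g i / (b i * N₀)) ≤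
      B * Real.logb 2 (1 + P * g 0 / (B * N₀)) := by
  have h2 : (1:ℝ) < 2 := one_lt_two
  set w : Fin (n+1) → ℝ := fun i => b i / B with hw
  set x : Fin (n+1) → ℝ := fun i => 1 + p i * g 0 / (b i * N₀) with hx
  have hxnn : ∀ i, 0 ≤ p i * g 0 / (b i * N₀) := fun i =>
    div_nonneg (mul_nonneg (hp i) (hgpos 0).le) (mul_nonneg (hb i) hN.le)
  have hx1 : ∀ i, (1:ℝ) ≤ x i := fun i => le_add_of_nonneg_right (hxnn i)
  have hwnn : ∀ i, 0 ≤ w i := fun i => div_nonneg (hb i) hB.le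
  have hwsum : ∑ i, w i = 1 := by
    simp only [hw, ← Finset.sum_div, hsumb]
    field_simp
  -- Step 1: replace each g i by g 0
  have step1 : ∑ i, b i * Real.logb 2 (1 + p i * g i / (b i * N₀)) ≤
      ∑ i, b i * Real.logb 2 (x i) := by
    apply Finset.sum_le_sum
    intro i _
    apply mul_le_mul_of_nonneg_left _ (hb i)
    apply Real.logb_le_logb_of_le h2
    · have : 0 ≤ p i * g i / (b i * N₀) :=
        div_nonneg (mul_nonneg (hp i) (hgpos i).le) (mul_nonneg (hb i) hN.le)
      linarith
    · have hgi : g i ≤ g 0 := hg 0 i (Fin.zero_le i)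
      rcases eq_or_lt_of_le (hb i) with h0 | h0
      · simp only [hx, ← h0]
        norm_num
      · have hden : 0 < b i * N₀ := mul_pos h0 hN
        show 1 + p i * g i / (b i * N₀) ≤ 1 + p i * g 0 / (b i * N₀)
        gcongr
        exact hp i
  -- Step 2: Jensen's inequality
  have hjensen : ∑ i, w i * Real.log (x i) ≤ Real.log (∑ i, w i * x i) := by
    have := (strictConcaveOn_log_Ioi.concaveOn).le_map_sum
      (t := Finset.univ) (w := w) (p := x)
      (fun i _ => hwnn i) hwsum (fun i _ => lt_of_lt_of_le one_pos (hx1 i))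
    simpa using this
  have hsumwx : ∑ i, w i * x i ≤ 1 + P * g 0 / (B * N₀) := by
    have hle : ∀ i : Fin (n+1), w i * x i ≤ b i / B + p i * g 0 / (B * N₀) := by
      intro i
      rcases eq_or_lt_of_le (hb i) with h0 | h0
      · have : w i = 0 := by simp [hw, ← h0]
        rw [this, zero_mul]
        have : 0 ≤ p i * g 0 / (B * N₀) :=
          div_nonneg (mul_nonneg (hp i) (hgpos 0).le) (mul_nonneg hB.le hN.le)
        have : 0 ≤ b i / B := div_nonneg (hb i) hB.le
        positivity
      · have : w i * x i = b i / B + p i * g 0 / (B * N₀) := by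
          simp only [hw, hx]
          field_simp
        rw [this]
    calc ∑ i, w i * x i ≤ ∑ i, (b i / B + p i * g 0 / (B * N₀)) :=
          Finset.sum_le_sum (fun i _ => hle i)
      _ = 1 + P * g 0 / (B * N₀) := by
          rw [Finset.sum_add_distrib, ← Finset.sum_div, hsumb]
          congr 1
          · field_simp
          · rw [← Finset.sum_div, ← Finset.sum_mul, hsump]
  have hsumwx_pos : (0:ℝ) < ∑ i, w i * x i := by
    have : (1:ℝ) = ∑ i, w i * 1 := by simp [hwsum]
    have h1le : (1:ℝ) ≤ ∑ i, w i * x i := by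
      rw [this]
      exact Finset.sum_le_sum (fun i _ => mul_le_mul_of_nonneg_left (hx1 i) (hwnn i))
    linarith
  -- combine
  have step2 : ∑ i, b i * Real.logb 2 (x i) ≤ B * Real.logb 2 (1 + P * g 0 / (B * N₀)) := by
    have hbi : ∀ i, b i = B * w i := by
      intro i; simp [hw]; field_simp
    have hrw : ∑ i, b i * Real.logb 2 (x i) = B * ∑ i, w i * Real.logb 2 (x i) := by
      rw [Finset.mul_sum]
      exact Finset.sum_congr rfl (fun i _ => by rw [hbi i]; ring)
    rw [hrw]
    apply mul_le_mul_of_nonneg_left _ hB.le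
    have hlog2 : (0:ℝ) < Real.log 2 := Real.log_pos h2
    have h1 : ∑ i, w i * Real.logb 2 (x i) = (∑ i, w i * Real.log (x i)) / Real.log 2 := by
      rw [Finset.sum_div]
      exact Finset.sum_congr rfl (fun i _ => by rw [Real.logb]; ring)
    rw [h1]
    calc (∑ i, w i * Real.log (x i)) / Real.log 2
        ≤ Real.log (∑ i, w i * x i) / Real.log 2 := by gcongr
      _ ≤ Real.logb 2 (1 + P * g 0 / (B * N₀)) := by
          rw [Real.logb]
          gcongr
  exact le_trans step1 step2
end

section
/- Let EE* be the optimal value of max (a + ∑_{k∈Ψ} cₖ)/(b + ∑_{k∈Ψ} dₖ) over all subsets Ψ of {1,...,K}, where a ≥ 0, b > 0, and cₖ ≥ 0, dₖ > 0. Then the greedy subset Ψ* = {k : cₖ/dₖ > EE*} achieves EE*, i.e., including exactly those users whose individual ratio exceeds the optimal ratio is optimal. -/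
/-- Greedy optimality of user selection: the subset `Ψ* = {k : cₖ/dₖ > EE*}` achieves the
optimal energy efficiency `EE* = max_Ψ (a + ∑_{k∈Ψ} cₖ)/(b + ∑_{k∈Ψ} dₖ)`. -/
theorem greedy_selection_optimal (K : ℕ) (a b : ℝ) (c d : Fin K → ℝ)
    (ha : 0 ≤ a) (hb : 0 < b) (hc : ∀ k, 0 ≤ c k) (hd : ∀ k, 0 < d k) (EEstar : ℝ)
    (hEE : IsGreatest
      (Set.range fun Ψ : Finset (Fin K) => (a + ∑ k ∈ Ψ, c k) / (b + ∑ k ∈ Ψ, d k)) EEstar) :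
    (a + ∑ k ∈ Finset.univ.filter (fun k => EEstar < c k / d k), c k) /
      (b + ∑ k ∈ Finset.univ.filter (fun k => EEstar < c k / d k), d k) = EEstar := by
  classical
  set S : Finset (Fin K) := Finset.univ.filter (fun k => EEstar < c k / d k) with hS
  set g : Fin K → ℝ := fun k => c k - EEstar * d k with hg
  have hmemS : ∀ k : Fin K, k ∈ S ↔ 0 < g k := by
    intro k
    simp only [hS, Finset.mem_filter, Finset.mem_univ, true_and, hg]
    rw [lt_div_iff₀ (hd k)]
    constructor <;> intro h <;> linarith
  have hdenom : ∀ Ψ : Finset (Fin K), 0 < b + ∑ k ∈ Ψ, d k := by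
    intro Ψ
    have : (0:ℝ) ≤ ∑ k ∈ Ψ, d k := Finset.sum_nonneg fun k _ => (hd k).le
    linarith
  obtain ⟨Ψ₀, hΨ₀⟩ := hEE.1
  have hub := hEE.2
  -- a + ∑_{Ψ₀} c = EEstar * (b + ∑_{Ψ₀} d)
  have heq : a + ∑ k ∈ Ψ₀, c k = EEstar * (b + ∑ k ∈ Ψ₀, d k) := by
    have := hΨ₀
    field_simp at this
    rw [div_eq_iff (hdenom Ψ₀).ne'] at this
    linarith [this]
  -- sum of g over Ψ₀ ≤ sum of g over S
  have hsum : ∑ k ∈ Ψ₀, g k ≤ ∑ k ∈ S, g k := by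
    have h1 : ∑ k ∈ Ψ₀, g k ≤ ∑ k ∈ Ψ₀ ∩ S, g k := by
      rw [← Finset.sum_inter_add_sum_sdiff Ψ₀ S g]
      have : ∑ k ∈ Ψ₀ \ S, g k ≤ 0 := by
        apply Finset.sum_nonpos
        intro k hk
        rcases Finset.mem_sdiff.mp hk with ⟨_, hks⟩
        exact le_of_not_gt fun h => hks ((hmemS k).mpr h)
      linarith
    have h2 : ∑ k ∈ Ψ₀ ∩ S, g k ≤ ∑ k ∈ S, g k := by
      apply Finset.sum_le_sum_of_subset_of_nonneg (Finset.inter_subset_right)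
      intro k hk _
      exact ((hmemS k).mp hk).le
    linarith
  -- hence a + ∑_S c ≥ EEstar * (b + ∑_S d)
  have hkey : EEstar * (b + ∑ k ∈ S, d k) ≤ a + ∑ k ∈ S, c k := by
    have e0 : ∑ k ∈ Ψ₀, g k = (a + ∑ k ∈ Ψ₀, c k) - EEstar * (b + ∑ k ∈ Ψ₀, d k) + (EEstar * b - a) := by
      simp only [hg, Finset.sum_sub_distrib, ← Finset.mul_sum]; ring
    have e1 : ∑ k ∈ S, g k = (a + ∑ k ∈ S, c k) - EEstar * (b + ∑ k ∈ S, d k) + (EEstar * b - a) := by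
      simp only [hg, Finset.sum_sub_distrib, ← Finset.mul_sum]; ring
    rw [e0, e1, heq] at hsum
    linarith
  have hge : EEstar ≤ (a + ∑ k ∈ S, c k) / (b + ∑ k ∈ S, d k) :=
    (le_div_iff₀ (hdenom S)).mpr hkey
  have hle : (a + ∑ k ∈ S, c k) / (b + ∑ k ∈ S, d k) ≤ EEstar := hub ⟨S, rfl⟩
  linarith
end
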